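/- Let H be a Hilbert space, Ψ : H → H, and suppose P, Q are orthogonal projections with P + Q = I. Assume: (i) there is C > 0 such that ‖Ψ(u) − Ψ(v)‖ ≤ C‖u − v‖ whenever ‖u − v‖ ≤ R; (ii) ‖Q(Ψ(u) − Ψ(v))‖ ≤ γ‖u − v‖ for γ ∈ (0,1) whenever ‖u − v‖ ≤ R. Let B be a bounded linear operator commuting with P and Q with ‖B‖ ≤ 1, ‖PB‖ ≤ κ, ‖I − B‖ ≤ b, and (I−B)Q = 0. Then for any u, v with ‖u − v‖ ≤ R and any ξ with ‖ξ‖ ≤ ε, the updated error e' = B(Ψ(u) − Ψ(v)) + (I−B)ξ satisfies ‖e'‖ ≤ (κC + γ)‖u − v‖ + 2bε. -/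

import Mathlib

open scoped RealInnerProductSpace

/-! Split `B w = P B w + Q B w` for `w = Ψ u - Ψ v`. The low modes are damped by the inflation,
`‖P B w‖ ≤ κ ‖w‖ ≤ κ C ‖u - v‖`; the high modes are contracted by the dynamics, because
`Q B w = B Q w` and `‖B‖ ≤ 1` give `‖Q B w‖ ≤ γ ‖u - v‖`. The observation noise adds
`‖(I - B) ξ‖ ≤ b ε`. -/

namespace ContinuousLinearMap

variable {𝕜 E : Type*} [NontriviallyNormedField 𝕜] [SeminormedAddCommGroup E] [NormedSpace 𝕜 E]

theorem norm_le_norm_apply_add_norm_apply {P Q : E →L[𝕜] E} (hPQ : P + Q = 1) (x : E) :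
    ‖x‖ ≤ ‖P x‖ + ‖Q x‖ := by
  have hsplit : P x + Q x = x := by rw [← add_apply, hPQ, one_apply_eq_self]
  simpa only [hsplit] using norm_add_le (P x) (Q x)

theorem norm_apply_le_of_add_eq_one_of_comp_comm {P Q B : E →L[𝕜] E} (hPQ : P + Q = 1)
    (hBQ : B.comp Q = Q.comp B) (w : E) :
    ‖B w‖ ≤ ‖P.comp B‖ * ‖w‖ + ‖B‖ * ‖Q w‖ := by
  have hQB : Q (B w) = B (Q w) := by rw [← comp_apply, ← hBQ, comp_apply]
  calc ‖B w‖ ≤ ‖P.comp B w‖ + ‖Q (B w)‖ := norm_le_norm_apply_add_norm_apply hPQ (B w)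
    _ ≤ ‖P.comp B‖ * ‖w‖ + ‖B‖ * ‖Q w‖ := by
      rw [hQB]
      exact add_le_add ((P.comp B).le_opNorm w) (B.le_opNorm (Q w))

end ContinuousLinearMap

open ContinuousLinearMap in
theorem one_step_contraction_estimate_general
    {H : Type*} [NormedAddCommGroup H] [InnerProductSpace ℝ H]
    (Ψ : H → H) (P Q B : H →L[ℝ] H)
    (hPQ : P + Q = 1)
    (R C γ κ b ε : ℝ)
    (hLip : ∀ u v : H, ‖u - v‖ ≤ R → ‖Ψ u - Ψ v‖ ≤ C * ‖u - v‖)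
    (hSqueeze : ∀ u v : H, ‖u - v‖ ≤ R → ‖Q (Ψ u - Ψ v)‖ ≤ γ * ‖u - v‖)
    (hBQ : B.comp Q = Q.comp B)
    (hBnorm : ‖B‖ ≤ 1) (hPB : ‖P.comp B‖ ≤ κ) (hIB : ‖(1 : H →L[ℝ] H) - B‖ ≤ b)
    (u v ξ : H) (huv : ‖u - v‖ ≤ R) (hξ : ‖ξ‖ ≤ ε) :
    ‖B (Ψ u - Ψ v) + ((1 : H →L[ℝ] H) - B) ξ‖ ≤ (κ * C + γ) * ‖u - v‖ + 2 * b * ε := by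
  have hκ : 0 ≤ κ := (norm_nonneg _).trans hPB
  have hb : 0 ≤ b := (norm_nonneg _).trans hIB
  have hε : 0 ≤ ε := (norm_nonneg _).trans hξ
  have hforecast : ‖B (Ψ u - Ψ v)‖ ≤ κ * (C * ‖u - v‖) + 1 * (γ * ‖u - v‖) :=
    (norm_apply_le_of_add_eq_one_of_comp_comm hPQ hBQ _).trans <|
      add_le_add (mul_le_mul hPB (hLip u v huv) (norm_nonneg _) hκ)
        (mul_le_mul hBnorm (hSqueeze u v huv) (norm_nonneg _) zero_le_one)
  have hnoise : ‖((1 : H →L[ℝ] H) - B) ξ‖ ≤ b * ε :=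
    (le_of_opNorm_le _ hIB ξ).trans (mul_le_mul_of_nonneg_left hξ hb)
  calc ‖B (Ψ u - Ψ v) + ((1 : H →L[ℝ] H) - B) ξ‖
      ≤ ‖B (Ψ u - Ψ v)‖ + ‖((1 : H →L[ℝ] H) - B) ξ‖ := norm_add_le _ _
    _ ≤ (κ * C + γ) * ‖u - v‖ + 2 * b * ε := by linarith [mul_nonneg hb hε]

theorem one_step_contraction_estimate
    {H : Type*} [NormedAddCommGroup H] [InnerProductSpace ℝ H] [CompleteSpace H]
    (Ψ : H → H) (P Q B : H →L[ℝ] H)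
    (hPQ : P + Q = 1)
    (hPidem : P.comp P = P) (hQidem : Q.comp Q = Q)
    (hPsa : ∀ x y : H, ⟪P x, y⟫ = ⟪x, P y⟫)
    (hQsa : ∀ x y : H, ⟪Q x, y⟫ = ⟪x, Q y⟫)
    (R C γ κ b ε : ℝ) (hC : 0 < C) (hγ : γ ∈ Set.Ioo (0:ℝ) 1)
    (hLip : ∀ u v : H, ‖u - v‖ ≤ R → ‖Ψ u - Ψ v‖ ≤ C * ‖u - v‖)
    (hSqueeze : ∀ u v : H, ‖u - v‖ ≤ R → ‖Q (Ψ u - Ψ v)‖ ≤ γ * ‖u - v‖)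
    (hBP : B.comp P = P.comp B) (hBQ : B.comp Q = Q.comp B)
    (hBnorm : ‖B‖ ≤ 1) (hPB : ‖P.comp B‖ ≤ κ) (hIB : ‖(1 : H →L[ℝ] H) - B‖ ≤ b)
    (hIBQ : ((1 : H →L[ℝ] H) - B).comp Q = 0)
    (u v ξ : H) (huv : ‖u - v‖ ≤ R) (hξ : ‖ξ‖ ≤ ε) :
    ‖B (Ψ u - Ψ v) + ((1 : H →L[ℝ] H) - B) ξ‖ ≤ (κ * C + γ) * ‖u - v‖ + 2 * b * ε :=
  one_step_contraction_estimate_general Ψ P Q B hPQ R C γ κ b ε hLip hSqueeze hBQ hBnorm hPB hIB u v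
    ξ huv hξ
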